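/- Let p be a prime and let λ be a multiset of positive integers that is not p-carry-minimal. Then there exists a multiset λ' ∈ ann_p(λ) with α_p(λ') < α_p(λ). -/

import Mathlib

open MvPolynomial

/-- The `m`-coboundary map `δ_m` on polynomials in `k` variables `x_1, …, x_k`
(indexed by `Fin k`, with `j : Fin k` standing for the variable `x_{j+1}`),
landing in polynomials in the variables `x_0, …, x_k` (indexed by `Fin (k+1)`). -/
noncomputable def delta (A : Type*) [CommRing A] (m k : ℕ)
    (f : MvPolynomial (Fin k) A) : MvPolynomial (Fin (k + 1)) A :=
  aeval (fun j : Fin k => (X j.succ : MvPolynomial (Fin (k + 1)) A)) f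
    + ∑ i ∈ Finset.Icc 1 m, (-1 : MvPolynomial (Fin (k + 1)) A) ^ i *
        aeval (fun j : Fin k =>
          if (j : ℕ) + 1 < i then (X j.castSucc : MvPolynomial (Fin (k + 1)) A)
          else if (j : ℕ) + 1 = i then X j.castSucc + X j.succ
          else X j.succ) f
    + (-1 : MvPolynomial (Fin (k + 1)) A) ^ (m + 1) *
        aeval (fun j : Fin k =>
          if (j : ℕ) + 1 ≤ m then (X j.castSucc : MvPolynomial (Fin (k + 1)) A)
          else X j.succ) f

/-- The monomial symmetric polynomial `τ λ` associated to a multi-index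
`λ : Fin k → ℕ`: the sum of `x^μ` over the distinct rearrangements `μ` of `λ`. -/
noncomputable def tau (A : Type*) [CommRing A] {k : ℕ} (lam : Fin k → ℕ) :
    MvPolynomial (Fin k) A :=
  ∑ d ∈ (Finset.univ : Finset (Equiv.Perm (Fin k))).image
      (fun σ => Finsupp.equivFunOnFinite.symm (fun i => lam (σ i))),
    monomial d (1 : A)

/-- The multiset of values of a multi-index `Fin k → ℕ`. -/
def multisetOf {k : ℕ} (lam : Fin k → ℕ) : Multiset ℕ :=
  Multiset.map lam Finset.univ.val

/-- The exponent multiset of an exponent vector `d : Fin k →₀ ℕ`. -/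
def exMult {k : ℕ} (d : Fin k →₀ ℕ) : Multiset ℕ :=
  multisetOf (⇑d)

/-- `σ_p(n)`, the sum of the digits of `n` in base `p`. -/
def sigmaDigits (p n : ℕ) : ℕ := (Nat.digits p n).sum

/-- `α_p(λ)`, the number of carries when summing the entries of `λ` in base `p`;
equivalently the `p`-adic valuation of the multinomial coefficient of `λ`. -/
def alphaCarry (p : ℕ) (s : Multiset ℕ) : ℕ :=
  padicValNat p (Nat.factorial s.sum / (s.map Nat.factorial).prod)

/-- The splitting distance `φ_p(λ) = (Σ_i σ_p(λ_i)) − |λ|`. -/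
def phiSplit (p : ℕ) (s : Multiset ℕ) : ℕ :=
  (s.map (sigmaDigits p)).sum - Multiset.card s

/-- A multiset is power-of-`p` when all its entries are powers of `p`. -/
def IsPowOf (p : ℕ) (s : Multiset ℕ) : Prop := ∀ x ∈ s, ∃ a : ℕ, x = p ^ a

/-- `λ` is `p`-carry-minimal: `α_p(λ) ≤ α_p(μ)` for every multiset `μ` of positive
integers with the same sum and the same number of entries as `λ`. -/
def IsCarryMin (p : ℕ) (s : Multiset ℕ) : Prop :=
  ∀ t : Multiset ℕ, (∀ x ∈ t, 0 < x) → t.sum = s.sum →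
    Multiset.card t = Multiset.card s → alphaCarry p s ≤ alphaCarry p t

/-- A single gathering operation: replace two entries `a`, `b` by `a + b`. -/
def Gathers (s t : Multiset ℕ) : Prop :=
  ∃ a b u, s = a ::ₘ b ::ₘ u ∧ t = (a + b) ::ₘ u

/-- `gatherSet m λ = T^m(λ)`, the set of multisets obtained from `λ` by `m`
successive gathering operations. -/
def gatherSet : ℕ → Multiset ℕ → Set (Multiset ℕ)
  | 0, s => {s}
  | m + 1, s => {t | ∃ u ∈ gatherSet m s, Gathers u t}

/-- One step of the annihilating-set construction: split an entry `x = a + b`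
(with `a, b > 0` and no base-`p` carries in `a + b`), and add `b` onto another
entry `y`. -/
def AnnStep (p : ℕ) (μ ν : Multiset ℕ) : Prop :=
  ∃ (x y a b : ℕ) (u : Multiset ℕ), μ = x ::ₘ y ::ₘ u ∧ 0 < a ∧ 0 < b ∧ a + b = x ∧
    sigmaDigits p a + sigmaDigits p b = sigmaDigits p x ∧ ν = a ::ₘ (b + y) ::ₘ u

/-- `ann_p(λ)`: the smallest set of multisets containing `λ` closed under `AnnStep`. -/
def annSet (p : ℕ) (lam : Multiset ℕ) : Set (Multiset ℕ) :=
  {μ | Relation.ReflTransGen (AnnStep p) lam μ}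

/-- The `m`-coboundary map as a linear map. -/
noncomputable def deltaLM (A : Type*) [CommRing A] (m k : ℕ) :
    MvPolynomial (Fin k) A →ₗ[A] MvPolynomial (Fin (k + 1)) A :=
  (aeval (fun j : Fin k => (X j.succ : MvPolynomial (Fin (k + 1)) A))).toLinearMap
    + ∑ i ∈ Finset.Icc 1 m, ((-1 : A) ^ i) •
        (aeval (fun j : Fin k =>
          if (j : ℕ) + 1 < i then (X j.castSucc : MvPolynomial (Fin (k + 1)) A)
          else if (j : ℕ) + 1 = i then X j.castSucc + X j.succ
          else X j.succ)).toLinearMap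
    + ((-1 : A) ^ (m + 1)) •
        (aeval (fun j : Fin k =>
          if (j : ℕ) + 1 ≤ m then (X j.castSucc : MvPolynomial (Fin (k + 1)) A)
          else X j.succ)).toLinearMap

/-!
By Legendre's formula, `(p - 1) * α_p(λ) = Σ σ_p(λ_i) - σ_p(|λ|)`, and annihilating moves keep
`|λ|`, so it suffices to lower `Σ σ_p(λ_i)` inside `ann_p(λ)`. If `λ` is not carry-minimal, this
sum exceeds `#λ` by at least `p - 1`, and since `α_p(λ) > 0` some column `a` of the base-`p`
addition of the entries holds at least `p` units `p^a`. These units are poured, without carries,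
into one entry `y`, raising its digit at `a` until a pour overflows it; that pour carries and
lowers `Σ σ_p` by at least `p - 1`. An entry equal to `p^a` cannot give its unit away; it first
borrows a unit `p^b` from an entry `z` with `σ_p(z) ≥ 2`, which exists because of the surplus
`Σ σ_p(λ_i) - #λ ≥ p - 1`.
-/

section Carries

variable {p : ℕ}

def digit (p a x : ℕ) : ℕ := x / p ^ a % p

lemma digit_lt (hp : 2 ≤ p) (a x : ℕ) : digit p a x < p := Nat.mod_lt _ (by omega)

lemma digit_zero_mul_add {A r : ℕ} (hr : r < p) : digit p 0 (A * p + r) = r := by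
  simp [digit, Nat.add_comm (A * p), Nat.mod_eq_of_lt hr]

lemma digit_succ_mul_add {A r : ℕ} (hr : r < p) (j : ℕ) :
    digit p (j + 1) (A * p + r) = digit p j A := by
  have hdiv : (A * p + r) / p = A := by
    rw [Nat.add_comm, Nat.add_mul_div_right _ _ (by omega), Nat.div_eq_of_lt hr, Nat.zero_add]
  rw [digit, pow_succ', ← Nat.div_div_eq_div_mul, hdiv, digit]

lemma sigmaDigits_mul_add (hp : 2 ≤ p) {A r : ℕ} (hr : r < p) :
    sigmaDigits p (A * p + r) = sigmaDigits p A + r := by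
  rcases Nat.eq_zero_or_pos A with rfl | hA
  · rcases Nat.eq_zero_or_pos r with rfl | hr0
    · simp [sigmaDigits]
    · simp [sigmaDigits, Nat.digits_of_lt p r hr0.ne' hr]
  · rw [sigmaDigits, Nat.add_comm, Nat.mul_comm, Nat.digits_add p (by omega) r A hr (Or.inr hA.ne'),
      List.sum_cons, sigmaDigits, Nat.add_comm]

lemma form_succ_eq_mul_add (hi c lo a : ℕ) :
    hi * p ^ (a + 2) + c * p ^ (a + 1) + lo
      = (hi * p ^ (a + 1) + c * p ^ a + lo / p) * p + lo % p := by
  have := Nat.div_add_mod' lo p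
  rw [pow_succ _ (a + 1), pow_succ _ a]
  nlinarith

lemma sigmaDigits_form (hp : 2 ≤ p) (hi : ℕ) {a c lo : ℕ} (hc : c < p) (hlo : lo < p ^ a) :
    sigmaDigits p (hi * p ^ (a + 1) + c * p ^ a + lo)
      = sigmaDigits p hi + c + sigmaDigits p lo := by
  induction a generalizing lo with
  | zero =>
    obtain rfl : lo = 0 := by simpa using hlo
    simpa [sigmaDigits] using sigmaDigits_mul_add hp (A := hi) hc
  | succ a ih =>
    have hmod : lo % p < p := Nat.mod_lt _ (by omega)
    have hdiv : lo / p < p ^ a := Nat.div_lt_of_lt_mul (by rwa [← pow_succ'])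
    rw [form_succ_eq_mul_add, sigmaDigits_mul_add hp hmod, ih hdiv,
      ← Nat.div_add_mod' lo p, sigmaDigits_mul_add hp hmod, Nat.div_add_mod' lo p]
    omega

lemma digit_form (hp : 2 ≤ p) (hi : ℕ) {a c lo : ℕ} (hc : c < p) (hlo : lo < p ^ a) (j : ℕ) :
    digit p j (hi * p ^ (a + 1) + c * p ^ a + lo)
      = if j = a then c else digit p j (hi * p ^ (a + 1) + lo) := by
  induction a generalizing lo j with
  | zero =>
    obtain rfl : lo = 0 := by simpa using hlo
    rcases j with _ | j
    · simpa using digit_zero_mul_add (A := hi) hc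
    · simpa using (digit_succ_mul_add hc j).trans
        (digit_succ_mul_add (A := hi) (r := 0) (by omega) j).symm
  | succ a ih =>
    have hmod : lo % p < p := Nat.mod_lt _ (by omega)
    have hdiv : lo / p < p ^ a := Nat.div_lt_of_lt_mul (by rwa [← pow_succ'])
    have hbase : hi * p ^ (a + 2) + lo = (hi * p ^ (a + 1) + lo / p) * p + lo % p := by
      simpa using form_succ_eq_mul_add hi 0 lo a
    rw [form_succ_eq_mul_add, hbase]
    rcases j with _ | j
    · rw [digit_zero_mul_add hmod, digit_zero_mul_add hmod, if_neg (by omega)]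
    · rw [digit_succ_mul_add hmod, digit_succ_mul_add hmod, ih hdiv]
      simp

lemma exists_digit_form (hp : 2 ≤ p) (a x : ℕ) :
    ∃ hi lo, lo < p ^ a ∧ x = hi * p ^ (a + 1) + digit p a x * p ^ a + lo := by
  refine ⟨x / p ^ (a + 1), x % p ^ a, Nat.mod_lt _ (by positivity), ?_⟩
  have h1 := Nat.div_add_mod' x (p ^ a)
  have h2 := Nat.div_add_mod' (x / p ^ a) p
  rw [Nat.div_div_eq_div_mul, ← pow_succ] at h2
  conv_lhs => rw [← h1, ← h2]
  rw [digit]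
  ring

lemma exists_eq_mul_add (hp : 0 < p) (n : ℕ) : ∃ A r, r < p ∧ n = A * p + r :=
  ⟨n / p, n % p, Nat.mod_lt _ hp, (Nat.div_add_mod' n p).symm⟩

lemma digit_mul_le (hp : 2 ≤ p) (a x : ℕ) : digit p a x * p ^ a ≤ x := by
  obtain ⟨hi, lo, -, hx⟩ := exists_digit_form hp a x
  omega

lemma digit_pow (hp : 2 ≤ p) (a j : ℕ) : digit p j (p ^ a) = if j = a then 1 else 0 := by
  simpa [digit] using digit_form (p := p) hp 0 (c := 1) (lo := 0) (by omega) (by positivity) j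

lemma sigmaDigits_mul_pow (hp : 2 ≤ p) {m : ℕ} (hm : m < p) (a : ℕ) :
    sigmaDigits p (m * p ^ a) = m := by
  simpa [sigmaDigits] using sigmaDigits_form hp 0 (lo := 0) hm (by positivity)

lemma sigmaDigits_pos {x : ℕ} (hx : 0 < x) : 0 < sigmaDigits p x :=
  (Nat.pos_of_ne_zero (Nat.getLast_digit_ne_zero p hx.ne')).trans_le
    (List.le_sum_of_mem (List.getLast_mem _))

lemma sigmaDigits_succ_le (hp : 2 ≤ p) (n : ℕ) :
    sigmaDigits p (n + 1) ≤ sigmaDigits p n + 1 := by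
  induction n using Nat.strong_induction_on with
  | _ n ih =>
  obtain ⟨A, r, hr, rfl⟩ := exists_eq_mul_add (by omega : 0 < p) n
  rw [sigmaDigits_mul_add hp hr]
  rcases Nat.lt_or_ge (r + 1) p with h | h
  · rw [Nat.add_assoc, sigmaDigits_mul_add hp h]
    omega
  · have e : A * p + r + 1 = (A + 1) * p + 0 := by rw [Nat.add_mul]; omega
    have hA : A < A * p + r := by nlinarith
    rw [e, sigmaDigits_mul_add hp (by omega)]
    have := ih A hA
    omega

lemma sigmaDigits_digit_form_replace (hp : 2 ≤ p) (hi : ℕ) {a c c' lo : ℕ} (hc : c < p)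
    (hc' : c' < p) (hlo : lo < p ^ a) :
    sigmaDigits p (hi * p ^ (a + 1) + c' * p ^ a + lo) + c
        = sigmaDigits p (hi * p ^ (a + 1) + c * p ^ a + lo) + c' ∧
      ∀ j, digit p j (hi * p ^ (a + 1) + c' * p ^ a + lo)
        = if j = a then c' else digit p j (hi * p ^ (a + 1) + c * p ^ a + lo) := by
  refine ⟨?_, fun j => ?_⟩
  · rw [sigmaDigits_form hp hi hc hlo, sigmaDigits_form hp hi hc' hlo]
    omega
  rw [digit_form hp hi hc' hlo, digit_form hp hi hc hlo]
  split_ifs <;> rfl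

lemma sigmaDigits_digit_sub_mul_pow (hp : 2 ≤ p) {a m x : ℕ} (hm : m ≤ digit p a x) :
    sigmaDigits p (x - m * p ^ a) + m = sigmaDigits p x ∧
      ∀ j, digit p j (x - m * p ^ a) = if j = a then digit p a x - m else digit p j x := by
  obtain ⟨hi, lo, hlo, hx⟩ := exists_digit_form hp a x
  have hc := digit_lt hp a x
  generalize digit p a x = c at hx hm hc ⊢
  subst hx
  have e : hi * p ^ (a + 1) + c * p ^ a + lo - m * p ^ a
      = hi * p ^ (a + 1) + (c - m) * p ^ a + lo := by
    have := Nat.mul_le_mul_right (p ^ a) hm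
    rw [Nat.sub_mul]
    omega
  obtain ⟨hσ, hd⟩ := sigmaDigits_digit_form_replace hp hi hc (by omega : c - m < p) hlo
  rw [e]
  exact ⟨by omega, hd⟩

lemma sigmaDigits_digit_mul_pow_add (hp : 2 ≤ p) {a m y : ℕ} (hm : digit p a y + m < p) :
    sigmaDigits p (m * p ^ a + y) = sigmaDigits p y + m ∧
      ∀ j, digit p j (m * p ^ a + y) = if j = a then digit p a y + m else digit p j y := by
  obtain ⟨hi, lo, hlo, hy⟩ := exists_digit_form hp a y
  have hc := digit_lt hp a y
  generalize digit p a y = c at hy hm hc ⊢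
  subst hy
  have e : m * p ^ a + (hi * p ^ (a + 1) + c * p ^ a + lo)
      = hi * p ^ (a + 1) + (c + m) * p ^ a + lo := by
    rw [Nat.add_mul]
    omega
  obtain ⟨hσ, hd⟩ := sigmaDigits_digit_form_replace hp hi hc hm hlo
  rw [e]
  exact ⟨by omega, hd⟩

lemma sigmaDigits_carry_le (hp : 2 ≤ p) (a y : ℕ) :
    sigmaDigits p ((p - digit p a y) * p ^ a + y) + digit p a y ≤ sigmaDigits p y + 1 := by
  obtain ⟨hi, lo, hlo, hy⟩ := exists_digit_form hp a y
  have hc := digit_lt hp a y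
  generalize digit p a y = c at hy hc ⊢
  subst hy
  have e : (p - c) * p ^ a + (hi * p ^ (a + 1) + c * p ^ a + lo)
      = (hi + 1) * p ^ (a + 1) + 0 * p ^ a + lo := by
    have : (p - c) * p ^ a + c * p ^ a = p ^ (a + 1) := by
      rw [← Nat.add_mul, Nat.sub_add_cancel hc.le, pow_succ']
    rw [Nat.add_mul]
    omega
  rw [e, sigmaDigits_form hp _ (by omega) hlo, sigmaDigits_form hp _ hc hlo]
  have := sigmaDigits_succ_le hp hi
  omega

lemma exists_digit_pos_pow_lt (hp : 2 ≤ p) {z : ℕ} (hz : 2 ≤ sigmaDigits p z) :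
    ∃ b, 0 < digit p b z ∧ p ^ b < z := by
  have hz0 : z ≠ 0 := by rintro rfl; simp [sigmaDigits] at hz
  obtain ⟨b, w, hw, rfl⟩ := Nat.exists_eq_pow_mul_and_not_dvd hz0 p (by omega)
  have hw0 : 0 < w := Nat.pos_of_ne_zero (by rintro rfl; simp at hw)
  have hw2 : 2 ≤ w := by
    simp only [sigmaDigits, Nat.digits_base_pow_mul (b := p) (k := b) (by omega) hw0,
      List.sum_append, List.sum_replicate, smul_zero, Nat.zero_add] at hz
    exact hz.trans (Nat.digit_sum_le p w)
  refine ⟨b, ?_, ?_⟩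
  · rw [digit, Nat.mul_div_cancel_left _ (by positivity)]
    exact Nat.pos_of_ne_zero fun h => hw (Nat.dvd_of_mod_eq_zero h)
  · calc p ^ b = p ^ b * 1 := (Nat.mul_one _).symm
      _ < p ^ b * w := Nat.mul_lt_mul_of_pos_left (by omega) (by positivity)

lemma sigmaDigits_digit_add (hp : 2 ≤ p) {x y : ℕ} (h : ∀ j, digit p j x + digit p j y < p) :
    sigmaDigits p (x + y) = sigmaDigits p x + sigmaDigits p y ∧
      ∀ j, digit p j (x + y) = digit p j x + digit p j y := by
  induction x using Nat.strong_induction_on generalizing y with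
  | _ x ih =>
  rcases Nat.eq_zero_or_pos x with rfl | hx
  · simp [sigmaDigits, digit]
  obtain ⟨X, r, hr, rfl⟩ := exists_eq_mul_add (by omega : 0 < p) x
  obtain ⟨Y, r', hr', rfl⟩ := exists_eq_mul_add (by omega : 0 < p) y
  have h0 := h 0
  rw [digit_zero_mul_add hr, digit_zero_mul_add hr'] at h0
  have e : X * p + r + (Y * p + r') = (X + Y) * p + (r + r') := by ring
  have hX : X < X * p + r := by nlinarith
  obtain ⟨ihσ, ihd⟩ := ih X hX fun j => by
    simpa [digit_succ_mul_add hr, digit_succ_mul_add hr'] using h (j + 1)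
  rw [e]
  refine ⟨?_, fun j => ?_⟩
  · rw [sigmaDigits_mul_add hp h0, sigmaDigits_mul_add hp hr, sigmaDigits_mul_add hp hr', ihσ]
    ring
  · rcases j with _ | j
    · simp only [digit_zero_mul_add h0, digit_zero_mul_add hr, digit_zero_mul_add hr']
    · simp only [digit_succ_mul_add h0, digit_succ_mul_add hr, digit_succ_mul_add hr', ihd]

def sigmaSum (p : ℕ) (s : Multiset ℕ) : ℕ := (s.map (sigmaDigits p)).sum

def columnSum (p a : ℕ) (s : Multiset ℕ) : ℕ := (s.map (digit p a)).sum

@[simp] lemma sigmaSum_cons (x : ℕ) (s : Multiset ℕ) :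
    sigmaSum p (x ::ₘ s) = sigmaDigits p x + sigmaSum p s := by
  simp [sigmaSum]

@[simp] lemma columnSum_cons (a x : ℕ) (s : Multiset ℕ) :
    columnSum p a (x ::ₘ s) = digit p a x + columnSum p a s := by
  simp [columnSum]

lemma phiSplit_eq (s : Multiset ℕ) : phiSplit p s = sigmaSum p s - Multiset.card s := rfl

lemma card_le_sigmaSum {s : Multiset ℕ} (hs : ∀ x ∈ s, 0 < x) :
    Multiset.card s ≤ sigmaSum p s := by
  simpa [sigmaSum] using Multiset.card_nsmul_le_sum (s := s.map (sigmaDigits p)) (a := 1)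
    (by simpa using fun x hx => Nat.one_le_iff_ne_zero.2 (sigmaDigits_pos (hs x hx)).ne')

lemma exists_mem_digit_pos {a : ℕ} {s : Multiset ℕ} (h : 0 < columnSum p a s) :
    ∃ y ∈ s, 0 < digit p a y := by
  by_contra! h'
  refine h.ne' (Multiset.sum_eq_zero fun d hd => ?_)
  obtain ⟨y, hy, rfl⟩ := Multiset.mem_map.1 hd
  exact Nat.le_zero.1 (h' y hy)

lemma sigmaDigits_sum_of_columnSum_lt (hp : 2 ≤ p) (s : Multiset ℕ)
    (h : ∀ a, columnSum p a s < p) :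
    sigmaDigits p s.sum = sigmaSum p s ∧ ∀ a, digit p a s.sum = columnSum p a s := by
  induction s using Multiset.induction_on with
  | empty => simp [sigmaSum, columnSum, sigmaDigits, digit]
  | cons x s ih =>
    obtain ⟨ihσ, ihd⟩ := ih fun a => by have := h a; rw [columnSum_cons] at this; omega
    obtain ⟨hσ, hd⟩ := sigmaDigits_digit_add (x := x) (y := s.sum) hp fun j => by
      rw [ihd]; simpa using h j
    rw [Multiset.sum_cons, hσ, ihσ, sigmaSum_cons]
    exact ⟨rfl, fun a => by rw [hd, ihd, columnSum_cons]⟩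

lemma exists_le_columnSum (hp : 2 ≤ p) {s : Multiset ℕ}
    (h : sigmaDigits p s.sum < sigmaSum p s) : ∃ a, p ≤ columnSum p a s := by
  by_contra! hlt
  exact h.ne (sigmaDigits_sum_of_columnSum_lt hp s hlt).1

lemma exists_two_le_sigmaDigits (hp : 2 ≤ p) {y : ℕ} {r : Multiset ℕ}
    (hphi : p - 1 ≤ phiSplit p (y ::ₘ r)) (hy : sigmaDigits p y < p) :
    ∃ z ∈ r, 2 ≤ sigmaDigits p z := by
  by_contra! h
  have hr : sigmaSum p r ≤ Multiset.card r := by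
    simpa [sigmaSum] using Multiset.sum_le_card_nsmul (r.map (sigmaDigits p)) 1
      (by simpa using fun z hz => Nat.le_of_lt_succ (h z hz))
  rw [phiSplit_eq, sigmaSum_cons, Multiset.card_cons] at hphi
  omega

lemma prod_map_factorial_dvd_factorial_sum (s : Multiset ℕ) :
    (s.map Nat.factorial).prod ∣ s.sum.factorial := by
  induction s using Multiset.induction_on with
  | empty => simp
  | cons x s ih =>
    rw [Multiset.map_cons, Multiset.prod_cons, Multiset.sum_cons]
    exact (Nat.mul_dvd_mul_left _ ih).trans (Nat.factorial_mul_factorial_dvd_factorial_add _ _)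

lemma prod_map_factorial_ne_zero (s : Multiset ℕ) : (s.map Nat.factorial).prod ≠ 0 :=
  Multiset.prod_ne_zero (by simp [Nat.factorial_ne_zero])

lemma sub_one_mul_padicValNat_factorial_add (hp : p.Prime) (n : ℕ) :
    (p - 1) * padicValNat p n.factorial + sigmaDigits p n = n := by
  have := Fact.mk hp
  have := sub_one_mul_padicValNat_factorial (p := p) n
  have := Nat.digit_sum_le p n
  rw [sigmaDigits]
  omega

lemma sub_one_mul_padicValNat_prod_factorial_add (hp : p.Prime) (s : Multiset ℕ) :
    (p - 1) * padicValNat p (s.map Nat.factorial).prod + sigmaSum p s = s.sum := by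
  have := Fact.mk hp
  induction s using Multiset.induction_on with
  | empty => simp [sigmaSum]
  | cons x s ih =>
    rw [Multiset.map_cons, Multiset.prod_cons,
      padicValNat.mul (Nat.factorial_ne_zero x) (prod_map_factorial_ne_zero s), sigmaSum_cons,
      Multiset.sum_cons, Nat.mul_add]
    have := sub_one_mul_padicValNat_factorial_add hp x
    omega

theorem sub_one_mul_alphaCarry_add (hp : p.Prime) (s : Multiset ℕ) :
    (p - 1) * alphaCarry p s + sigmaDigits p s.sum = sigmaSum p s := by
  have := Fact.mk hp
  have hdvd := prod_map_factorial_dvd_factorial_sum s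
  have hP := prod_map_factorial_ne_zero s
  have hsplit : padicValNat p s.sum.factorial
      = padicValNat p (s.map Nat.factorial).prod + alphaCarry p s := by
    rw [alphaCarry, ← padicValNat.mul hP, Nat.mul_div_cancel' hdvd]
    exact (Nat.div_pos (Nat.le_of_dvd (Nat.factorial_pos _) hdvd) (Nat.pos_of_ne_zero hP)).ne'
  have h1 := sub_one_mul_padicValNat_factorial_add hp s.sum
  have h2 := sub_one_mul_padicValNat_prod_factorial_add hp s
  rw [hsplit, Nat.mul_add] at h1
  omega

lemma AnnStep.sum_eq {μ ν : Multiset ℕ} (h : AnnStep p μ ν) : ν.sum = μ.sum := by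
  obtain ⟨x, y, a, b, u, rfl, -, -, hab, -, rfl⟩ := h
  simp only [Multiset.sum_cons]
  omega

lemma AnnStep.card_eq {μ ν : Multiset ℕ} (h : AnnStep p μ ν) :
    Multiset.card ν = Multiset.card μ := by
  obtain ⟨x, y, a, b, u, rfl, -, -, -, -, rfl⟩ := h
  simp

lemma sum_eq_of_mem_annSet {s t : Multiset ℕ} (h : t ∈ annSet p s) : t.sum = s.sum := by
  induction h with
  | refl => rfl
  | tail _ hstep ih => exact hstep.sum_eq.trans ih

lemma card_eq_of_mem_annSet {s t : Multiset ℕ} (h : t ∈ annSet p s) :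
    Multiset.card t = Multiset.card s := by
  induction h with
  | refl => rfl
  | tail _ hstep ih => exact hstep.card_eq.trans ih

lemma annStep_pour (hp : 2 ≤ p) {a m x : ℕ} (hm : 0 < m) (hmx : m ≤ digit p a x)
    (hlt : m * p ^ a < x) (y : ℕ) (u : Multiset ℕ) :
    AnnStep p (x ::ₘ y ::ₘ u) ((x - m * p ^ a) ::ₘ (m * p ^ a + y) ::ₘ u) := by
  refine ⟨x, y, x - m * p ^ a, m * p ^ a, u, rfl, by omega, by positivity, by omega, ?_, rfl⟩
  rw [sigmaDigits_mul_pow hp (hmx.trans_lt (digit_lt hp a x))]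
  exact (sigmaDigits_digit_sub_mul_pow hp hmx).1

lemma sigmaSum_pour (hp : 2 ≤ p) {a m x y : ℕ} (hmx : m ≤ digit p a x)
    (hmy : digit p a y + m < p) (u : Multiset ℕ) :
    sigmaSum p ((x - m * p ^ a) ::ₘ (m * p ^ a + y) ::ₘ u)
      = sigmaSum p (x ::ₘ y ::ₘ u) := by
  have := (sigmaDigits_digit_sub_mul_pow hp hmx).1
  have := (sigmaDigits_digit_mul_pow_add hp hmy).1
  simp only [sigmaSum_cons]
  omega

lemma columnSum_pour (hp : 2 ≤ p) {a m x y : ℕ} (hmx : m ≤ digit p a x)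
    (hmy : digit p a y + m < p) (u : Multiset ℕ) (j : ℕ) :
    columnSum p j ((x - m * p ^ a) ::ₘ (m * p ^ a + y) ::ₘ u)
      = columnSum p j (x ::ₘ y ::ₘ u) := by
  simp only [columnSum_cons, (sigmaDigits_digit_sub_mul_pow hp hmx).2 j,
    (sigmaDigits_digit_mul_pow_add hp hmy).2 j]
  split_ifs with h
  · subst h
    omega
  · rfl

lemma sigmaSum_pour_lt (hp : 2 ≤ p) {a x y : ℕ} (hmx : p - digit p a y ≤ digit p a x)
    (u : Multiset ℕ) :
    sigmaSum p ((x - (p - digit p a y) * p ^ a) ::ₘ ((p - digit p a y) * p ^ a + y) ::ₘ u)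
      < sigmaSum p (x ::ₘ y ::ₘ u) := by
  have := (sigmaDigits_digit_sub_mul_pow hp hmx).1
  have := sigmaDigits_carry_le hp a y
  have := digit_lt hp a y
  simp only [sigmaSum_cons]
  omega

def CarryReducible (p : ℕ) (s : Multiset ℕ) : Prop :=
  ∃ t ∈ annSet p s, sigmaSum p t < sigmaSum p s

def RaisesDigit (p a c : ℕ) (s : Multiset ℕ) : Prop :=
  ∃ t ∈ annSet p s, sigmaSum p t = sigmaSum p s ∧ columnSum p a t = columnSum p a s ∧
    ∃ y ∈ t, c < digit p a y

lemma CarryReducible.of_mem_annSet {s t : Multiset ℕ} (h : CarryReducible p t)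
    (ht : t ∈ annSet p s) (hσ : sigmaSum p t = sigmaSum p s) : CarryReducible p s := by
  obtain ⟨u, hu, hlt⟩ := h
  exact ⟨u, Relation.ReflTransGen.trans ht hu, hσ ▸ hlt⟩

lemma RaisesDigit.of_mem_annSet {a c : ℕ} {s t : Multiset ℕ} (h : RaisesDigit p a c t)
    (ht : t ∈ annSet p s) (hσ : sigmaSum p t = sigmaSum p s)
    (hcol : columnSum p a t = columnSum p a s) : RaisesDigit p a c s := by
  obtain ⟨u, hu, huσ, hucol, hy⟩ := h
  exact ⟨u, Relation.ReflTransGen.trans ht hu, huσ.trans hσ, hucol.trans hcol, hy⟩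

lemma carryReducible_or_raisesDigit_of_pour (hp : 2 ≤ p) {a m x y c : ℕ} (u : Multiset ℕ)
    (hm : 0 < m) (hmx : m ≤ digit p a x) (hlt : m * p ^ a < x) (hc : c < digit p a y + m) :
    CarryReducible p (x ::ₘ y ::ₘ u) ∨ RaisesDigit p a c (x ::ₘ y ::ₘ u) := by
  by_cases hcarry : p ≤ digit p a y + m
  · have hm' : p - digit p a y ≤ m := by omega
    have := digit_lt hp a y
    exact .inl ⟨_, .single (annStep_pour hp (by omega) (hm'.trans hmx)
      ((Nat.mul_le_mul_right _ hm').trans_lt hlt) y u), sigmaSum_pour_lt hp (hm'.trans hmx) u⟩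
  · refine .inr ⟨_, .single (annStep_pour hp hm hmx hlt y u), sigmaSum_pour hp hmx (by omega) u,
      columnSum_pour hp hmx (by omega) u a, m * p ^ a + y,
      Multiset.mem_cons_of_mem (Multiset.mem_cons_self _ _), ?_⟩
    rw [(sigmaDigits_digit_mul_pow_add hp (by omega)).2 a, if_pos rfl]
    omega

lemma carryReducible_or_raisesDigit_of_lend (hp : 2 ≤ p) {a b c x y z : ℕ} (v : Multiset ℕ)
    (hx : x = p ^ a) (hba : b ≠ a) (hzb : 0 < digit p b z) (hz : p ^ b < z)
    (hc : c < digit p a y + 1) :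
    CarryReducible p (z ::ₘ x ::ₘ y ::ₘ v) ∨
      RaisesDigit p a c (z ::ₘ x ::ₘ y ::ₘ v) := by
  have hxb : digit p b x + 1 < p := by rw [hx, digit_pow hp, if_neg hba]; omega
  have hmem :
      (z - 1 * p ^ b) ::ₘ (1 * p ^ b + x) ::ₘ y ::ₘ v ∈ annSet p (z ::ₘ x ::ₘ y ::ₘ v) :=
    .single (annStep_pour hp one_pos hzb (by simpa using hz) x (y ::ₘ v))
  have hx'a : digit p a (1 * p ^ b + x) = 1 := by
    rw [(sigmaDigits_digit_mul_pow_add hp hxb).2 a, if_neg hba.symm, hx, digit_pow hp, if_pos rfl]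
  have hx'lt : 1 * p ^ a < 1 * p ^ b + x := by
    have := pow_pos (by omega : 0 < p) b
    omega
  have hnext := carryReducible_or_raisesDigit_of_pour hp ((z - 1 * p ^ b) ::ₘ v) one_pos
    hx'a.ge hx'lt hc
  rw [Multiset.cons_swap y, Multiset.cons_swap (1 * p ^ b + x)] at hnext
  exact hnext.imp (·.of_mem_annSet hmem (sigmaSum_pour hp hzb hxb _))
    (·.of_mem_annSet hmem (sigmaSum_pour hp hzb hxb _) (columnSum_pour hp hzb hxb _ a))

lemma carryReducible_or_raisesDigit_of_eq_pow (hp : 2 ≤ p) {a x y : ℕ} {u : Multiset ℕ}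
    (hphi : p - 1 ≤ phiSplit p (y ::ₘ x ::ₘ u)) (hy : 0 < digit p a y) (hxa : x = p ^ a)
    (hpure : ∀ w ∈ x ::ₘ u, 0 < digit p a w → w = p ^ a) :
    CarryReducible p (y ::ₘ x ::ₘ u) ∨ RaisesDigit p a (digit p a y) (y ::ₘ x ::ₘ u) := by
  by_cases hylt : digit p a y * p ^ a < y
  · exact carryReducible_or_raisesDigit_of_pour hp u hy le_rfl hylt
      (by rw [hxa, digit_pow hp, if_pos rfl]; omega)
  have hyσ : sigmaDigits p y < p := by
    rw [← (digit_mul_le hp a y).antisymm (not_lt.1 hylt),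
      sigmaDigits_mul_pow hp (digit_lt hp a y)]
    exact digit_lt hp a y
  obtain ⟨z, hz, hz2⟩ := exists_two_le_sigmaDigits hp hphi hyσ
  have hza : digit p a z = 0 := by
    by_contra h
    have hσ : sigmaDigits p (p ^ a) = 1 := by
      simpa using sigmaDigits_mul_pow hp (by omega : 1 < p) a
    rw [hpure z hz (Nat.pos_of_ne_zero h), hσ] at hz2
    omega
  have hzu : z ∈ u := by
    rcases Multiset.mem_cons.1 hz with rfl | hzu
    · rw [hxa, digit_pow hp, if_pos rfl] at hza
      omega
    · exact hzu
  obtain ⟨v, rfl⟩ := Multiset.exists_cons_of_mem hzu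
  obtain ⟨b, hb, hbz⟩ := exists_digit_pos_pow_lt hp hz2
  have hba : b ≠ a := by rintro rfl; omega
  rw [Multiset.cons_swap x, Multiset.cons_swap y, Multiset.cons_swap y]
  exact carryReducible_or_raisesDigit_of_lend hp v hxa hba hb hbz (Nat.lt_succ_self _)

lemma carryReducible_or_raisesDigit (hp : 2 ≤ p) {a y : ℕ} {r : Multiset ℕ}
    (hcol : p ≤ columnSum p a (y ::ₘ r)) (hphi : p - 1 ≤ phiSplit p (y ::ₘ r))
    (hy : 0 < digit p a y) :
    CarryReducible p (y ::ₘ r) ∨ RaisesDigit p a (digit p a y) (y ::ₘ r) := by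
  by_cases hdonor : ∃ x ∈ r, 0 < digit p a x ∧ p ^ a < x
  · obtain ⟨x, hx, hx0, hxlt⟩ := hdonor
    obtain ⟨u, rfl⟩ := Multiset.exists_cons_of_mem hx
    rw [Multiset.cons_swap]
    exact carryReducible_or_raisesDigit_of_pour hp u one_pos hx0 (by simpa using hxlt) (by omega)
  push Not at hdonor
  have hpure : ∀ x ∈ r, 0 < digit p a x → x = p ^ a := fun x hx hx0 =>
    (hdonor x hx hx0).antisymm ((Nat.le_mul_of_pos_left _ hx0).trans (digit_mul_le hp a x))
  obtain ⟨x, hx, hx0⟩ := exists_mem_digit_pos (p := p) (a := a) (s := r) (by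
    have := digit_lt hp a y
    rw [columnSum_cons] at hcol
    omega)
  obtain ⟨u, rfl⟩ := Multiset.exists_cons_of_mem hx
  exact carryReducible_or_raisesDigit_of_eq_pow hp hphi hy (hpure x hx hx0) hpure

lemma carryReducible_of_mem (hp : 2 ≤ p) {a y : ℕ} {s : Multiset ℕ} (hy : y ∈ s)
    (hy0 : 0 < digit p a y) (hcol : p ≤ columnSum p a s) (hphi : p - 1 ≤ phiSplit p s) :
    CarryReducible p s := by
  induction hN : p - digit p a y using Nat.strong_induction_on generalizing s y with
  | _ N ih =>
  obtain ⟨r, rfl⟩ := Multiset.exists_cons_of_mem hy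
  obtain h | ⟨t, ht, hσ, hcolt, y', hy', hlt⟩ := carryReducible_or_raisesDigit hp hcol hphi hy0
  · exact h
  · have hphit : p - 1 ≤ phiSplit p t := by rwa [phiSplit_eq, hσ, card_eq_of_mem_annSet ht]
    have := digit_lt hp a y'
    exact (ih _ (by omega) hy' (by omega) (hcolt ▸ hcol) hphit rfl).of_mem_annSet ht hσ

theorem carryReducible_of_le_columnSum (hp : 2 ≤ p) {a : ℕ} {s : Multiset ℕ}
    (hcol : p ≤ columnSum p a s) (hphi : p - 1 ≤ phiSplit p s) : CarryReducible p s := by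
  obtain ⟨y, hy, hy0⟩ := exists_mem_digit_pos (p := p) (a := a) (s := s) (by omega)
  exact carryReducible_of_mem hp hy hy0 hcol hphi

end Carries

theorem statement13_general (p : ℕ) (hp : p.Prime) (lam : Multiset ℕ)
    (hmin : ¬ IsCarryMin p lam) :
    ∃ lam' ∈ annSet p lam, alphaCarry p lam' < alphaCarry p lam := by
  obtain ⟨t, htpos, htsum, htcard, hlt⟩ : ∃ t : Multiset ℕ, (∀ x ∈ t, 0 < x) ∧
      t.sum = lam.sum ∧ Multiset.card t = Multiset.card lam ∧
        alphaCarry p t < alphaCarry p lam := by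
    simpa [IsCarryMin] using hmin
  have hp2 := hp.two_le
  have hlam := sub_one_mul_alphaCarry_add hp lam
  have ht := sub_one_mul_alphaCarry_add hp t
  rw [htsum] at ht
  have hgap : (p - 1) * alphaCarry p t + (p - 1) ≤ (p - 1) * alphaCarry p lam := by
    simpa [Nat.mul_add] using Nat.mul_le_mul_left (p - 1) hlt
  have hcard := card_le_sigmaSum (p := p) htpos
  obtain ⟨a, ha⟩ := exists_le_columnSum hp2 (s := lam) (by omega)
  obtain ⟨ν, hν, hνlt⟩ := carryReducible_of_le_columnSum hp2 ha (by rw [phiSplit_eq]; omega)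
  refine ⟨ν, hν, Nat.lt_of_mul_lt_mul_left (a := p - 1) ?_⟩
  have hnu := sub_one_mul_alphaCarry_add hp ν
  rw [sum_eq_of_mem_annSet hν] at hnu
  omega

/-- If `λ` is not `p`-carry-minimal, then its annihilating set
contains a multiset of strictly smaller carry count. -/
theorem statement13 (p : ℕ) (hp : p.Prime) (lam : Multiset ℕ)
    (hpos : ∀ x ∈ lam, 0 < x) (hmin : ¬ IsCarryMin p lam) :
    ∃ lam' ∈ annSet p lam, alphaCarry p lam' < alphaCarry p lam :=
  statement13_general p hp lam hmin
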